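/- arXiv:0707.2329 — 8 statements merged into one kernel-verified Lean document; each statement's English description precedes it below -/
import Mathlib

section
/- Let L : c₀(I) → c₀(J) be a linear isometry, k ∈ I, and j ∈ J with |L(e^k)(j)| = 1. Then for every v ∈ c₀(I) with v(k) = 0, one has L(v)(j) = 0. -/
open scoped ZeroAtInfty

/-- The canonical basis vector `e^k` of `c₀(I)`: the function which is `1` at `k` and `0`
elsewhere. -/
noncomputable def stdBasis {I : Type*} [TopologicalSpace I] [DiscreteTopology I]
    [DecidableEq I] (k : I) : C₀(I, ℂ) :=
  ⟨⟨fun i => if i = k then 1 else 0, continuous_of_discreteTopology⟩, by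
    refine Filter.Tendsto.congr' ?_ tendsto_const_nhds
    filter_upwards [(isCompact_singleton (x := k)).compl_mem_cocompact] with i hi
    simp only [Set.mem_compl_iff, Set.mem_singleton_iff] at hi
    simp [hi]⟩

/-!
If `L v j ≠ 0`, rotate and shrink `v` to `c • v` with `‖c • v‖ ≤ 1` and `c * L v j` a positive
multiple of `L (e^k) j`. Since `v k = 0`, the supports of `e^k` and `c • v` only meet where
`c • v` vanishes, so `‖e^k + c • v‖ ≤ 1`; but `|L (e^k + c • v) j| = 1 + |c * L v j| > 1`,
contradicting that `L` is an isometry.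
-/

namespace ZeroAtInftyContinuousMap

variable {α E : Type*} [TopologicalSpace α] [SeminormedAddCommGroup E]

theorem norm_apply_le (f : C₀(α, E)) (x : α) : ‖f x‖ ≤ ‖f‖ :=
  f.toBCF.norm_coe_le_norm x

theorem norm_le_of_forall_norm_apply_le {f : C₀(α, E)} {C : ℝ} (hC : 0 ≤ C)
    (h : ∀ x, ‖f x‖ ≤ C) : ‖f‖ ≤ C :=
  (BoundedContinuousFunction.norm_le hC).2 h

end ZeroAtInftyContinuousMap

open ZeroAtInftyContinuousMap

theorem norm_stdBasis_add_le_one {I : Type*} [TopologicalSpace I] [DiscreteTopology I]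
    [DecidableEq I] {k : I} {v : C₀(I, ℂ)} (hv : v k = 0) (hv₁ : ‖v‖ ≤ 1) :
    ‖stdBasis k + v‖ ≤ 1 := by
  refine norm_le_of_forall_norm_apply_le zero_le_one fun i => ?_
  by_cases hik : i = k
  · subst hik
    simp [stdBasis, hv]
  · simpa [stdBasis, hik] using (norm_apply_le v i).trans hv₁

theorem RCLike.eq_zero_of_forall_norm_add_mul_le_one {𝕜 : Type*} [RCLike 𝕜] {a b : 𝕜} {r : ℝ}
    (hr : 0 < r) (ha : ‖a‖ = 1) (h : ∀ c : 𝕜, ‖c‖ ≤ r → ‖a + c * b‖ ≤ 1) : b = 0 := by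
  by_contra hb
  have hb' : 0 < ‖b‖ := norm_pos_iff.2 hb
  set c : 𝕜 := (r * ‖b‖ : ℝ) * a / b
  have hc : ‖c‖ = r := by
    simp only [c, norm_div, norm_mul, RCLike.norm_ofReal, ha, abs_of_pos (mul_pos hr hb')]
    field_simp
  have hcb : a + c * b = ((1 + r * ‖b‖ : ℝ) : 𝕜) * a := by
    simp only [c, RCLike.ofReal_add, RCLike.ofReal_one]
    field_simp
  have := h c hc.le
  rw [hcb, norm_mul, ha, mul_one, RCLike.norm_ofReal, abs_of_pos (by positivity)] at this
  linarith [mul_pos hr hb']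

/-- Let `L : c₀(I) → c₀(J)` be a linear isometry, `k ∈ I`, and `j ∈ J` with
`|L(e^k)(j)| = 1`.  Then for every `v ∈ c₀(I)` with `v(k) = 0` one has `L(v)(j) = 0`. -/
theorem stmt4 {I J : Type*} [TopologicalSpace I] [DiscreteTopology I] [DecidableEq I]
    [TopologicalSpace J] [DiscreteTopology J]
    (L : C₀(I, ℂ) →ₗᵢ[ℂ] C₀(J, ℂ)) (k : I) (j : J) (hj : ‖L (stdBasis k) j‖ = 1)
    (v : C₀(I, ℂ)) (hv : v k = 0) :
    L v j = 0 := by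
  refine RCLike.eq_zero_of_forall_norm_add_mul_le_one (r := (‖v‖ + 1)⁻¹) (by positivity) hj
    fun c hc => ?_
  have hcv : ‖c • v‖ ≤ 1 := by
    rw [norm_smul]
    calc ‖c‖ * ‖v‖ ≤ (‖v‖ + 1)⁻¹ * (‖v‖ + 1) := by gcongr; linarith
      _ = 1 := inv_mul_cancel₀ (by positivity)
  calc ‖L (stdBasis k) j + c * L v j‖ = ‖L (stdBasis k + c • v) j‖ := by simp
    _ ≤ ‖stdBasis k + c • v‖ := by rw [← L.norm_map]; exact norm_apply_le _ j
    _ ≤ 1 := norm_stdBasis_add_le_one (by simp [hv]) hcv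
end

section
/- There is no continuous linear projection π : ℂ³ → ℂ³ (with the sup norm on ℂ³) of norm 1 whose range is the subspace L(ℂ²) = {(x, y, x+y) : x, y ∈ ℂ}. -/
/-!
The operator norm of a map on a sup-normed space `𝕜ⁿ` is the largest `ℓ¹` norm of a row of its
matrix, so every row of the matrix `a` of `π` has `ℓ¹` norm at most `1`. Since `π` fixes
`(1,0,1)` and `(0,1,1)`, row `i ∈ {0, 1}` satisfies `a i i + a i 2 = 1` and
`a i (1 - i) + a i 2 = 0`, which with the norm bound forces `a i 2 = 0`. Because `π` maps into the
plane, its last row is the sum of the first two; so `a 2 2 = 0`, whence `a 2 0 = a 2 1 = 1` and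
the last row has `ℓ¹` norm `2`.
-/

open scoped Matrix.Norms.Operator in
theorem ContinuousLinearMap.sum_norm_apply_single_le_opNorm {𝕜 : Type*}
    [NontriviallyNormedField 𝕜] [NormedAlgebra ℝ 𝕜] {m n : Type*} [Fintype m] [Fintype n]
    [DecidableEq n] (f : (n → 𝕜) →L[𝕜] (m → 𝕜)) (i : m) :
    ∑ j, ‖f (Pi.single j 1) i‖ ≤ ‖f‖ := by
  rw [← Matrix.linfty_opNorm_toMatrix, Matrix.linfty_opNorm_def]
  simp only [LinearMap.toMatrix'_apply, ContinuousLinearMap.coe_coe]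
  refine le_of_eq_of_le ?_ (NNReal.coe_le_coe.2 (Finset.le_sup (Finset.mem_univ i)))
  simp

theorem eq_zero_of_add_eq_of_add_eq_zero_of_norm_le {E : Type*} [NormedAddCommGroup E]
    {a b c u : E} (hac : a + c = u) (hbc : b + c = 0) (hnorm : ‖a‖ + ‖b‖ + ‖c‖ ≤ ‖u‖) :
    c = 0 := by
  have hb : ‖b‖ = ‖c‖ := by rw [eq_neg_of_add_eq_zero_left hbc, norm_neg]
  have hu : ‖u‖ ≤ ‖a‖ + ‖c‖ := hac ▸ norm_add_le a c
  exact norm_le_zero_iff.1 (by linarith)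

/-- There is no continuous linear projection `π : ℂ³ → ℂ³` (sup norm) of norm 1 whose
range is the subspace `{(x, y, x+y) : x, y ∈ ℂ}`. -/
theorem stmt7 :
    ¬ ∃ π : (Fin 3 → ℂ) →L[ℂ] (Fin 3 → ℂ), π.comp π = π ∧ ‖π‖ = 1 ∧
      Set.range π = {v : Fin 3 → ℂ | v 2 = v 0 + v 1} := by
  rintro ⟨π, hidem, hnorm, hrange⟩
  set a : Fin 3 → Fin 3 → ℂ := fun i j => π (Pi.single j 1) i
  have hrow (i : Fin 3) : ‖a i 0‖ + ‖a i 1‖ + ‖a i 2‖ ≤ 1 := by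
    simpa [Fin.sum_univ_three, hnorm] using π.sum_norm_apply_single_le_opNorm i
  have hfix (v : Fin 3 → ℂ) (hv : v 2 = v 0 + v 1) : π v = v := by
    obtain ⟨w, rfl⟩ : v ∈ Set.range π := hrange ▸ hv
    exact congr($hidem w)
  have hfixed (i : Fin 3) :
      a i 0 + a i 2 = (Pi.single 0 1 + Pi.single 2 1 : Fin 3 → ℂ) i ∧
      a i 1 + a i 2 = (Pi.single 1 1 + Pi.single 2 1 : Fin 3 → ℂ) i := by
    constructor
    · rw [← hfix (Pi.single 0 1 + Pi.single 2 1) (by simp)]; simp [a]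
    · rw [← hfix (Pi.single 1 1 + Pi.single 2 1) (by simp)]; simp [a]
  have hlast : a 2 2 = a 0 2 + a 1 2 := (hrange ▸ Set.mem_range_self _ : π (Pi.single 2 1) ∈ _)
  have h02 : a 0 2 = 0 := eq_zero_of_add_eq_of_add_eq_zero_of_norm_le (u := 1)
    (by simpa using (hfixed 0).1) (by simpa using (hfixed 0).2) (by rw [norm_one]; exact hrow 0)
  have h12 : a 1 2 = 0 := eq_zero_of_add_eq_of_add_eq_zero_of_norm_le (u := 1)
    (by simpa using (hfixed 1).2) (by simpa using (hfixed 1).1) (by rw [norm_one]; linarith [hrow 1])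
  have h20 : a 2 0 = 1 := by simpa [hlast, h02, h12] using (hfixed 2).1
  have h21 : a 2 1 = 1 := by simpa [hlast, h02, h12] using (hfixed 2).2
  have h2 := hrow 2
  rw [h20, h21, hlast, h02, h12] at h2
  norm_num at h2
end

section
/- Let π : ℂ³ → ℂ³ (sup norm) be a linear projection of norm 1 onto the subspace {(x,y,x+y) : x,y ∈ ℂ}. Then π vanishes on {0} × ℂ × {0}. -/
/-!
Write `e = (1, 0, 1)` and `w = π (0, 1, 0)`. Since `e` lies in the range, `π (1, λ, 1) = e + λ w`,
and `(1, λ, 1)` has norm `1` for `|λ| ≤ 1`, so `|1 + λ w₀| ≤ 1` and `|1 + λ w₂| ≤ 1` for all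
such `λ`; choosing `λ` to align the phases forces `w₀ = w₂ = 0`, and then `w₁ = w₂ - w₀ = 0`
because `w` lies in the range.
-/

theorem RCLike.eq_zero_of_forall_norm_one_add_mul_le_one {𝕜 : Type*} [RCLike 𝕜] {a : 𝕜}
    (h : ∀ l : 𝕜, ‖l‖ ≤ 1 → ‖1 + l * a‖ ≤ 1) : a = 0 := by
  by_contra ha
  have hpos : 0 < ‖a‖ := norm_pos_iff.2 ha
  have hphase : (starRingEnd 𝕜 a / ‖a‖) * a = ‖a‖ := by
    rw [div_mul_eq_mul_div, RCLike.conj_mul, sq, mul_div_assoc,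
      div_self (RCLike.ofReal_ne_zero.2 hpos.ne'), mul_one]
  have hle := h (starRingEnd 𝕜 a / ‖a‖) (by simp [norm_div, hpos.ne'])
  rw [hphase, ← RCLike.ofReal_one, ← RCLike.ofReal_add, RCLike.norm_ofReal,
    abs_of_pos (by positivity)] at hle
  linarith

theorem ContinuousLinearMap.apply_eq_zero_of_norm_add_smul_le_one {𝕜 E ι : Type*} [RCLike 𝕜]
    [NormedAddCommGroup E] [NormedSpace 𝕜 E] [Fintype ι] {T : E →L[𝕜] (ι → 𝕜)} (hT : ‖T‖ ≤ 1)
    {x y : E} (hxy : ∀ l : 𝕜, ‖l‖ ≤ 1 → ‖x + l • y‖ ≤ 1) {i : ι} (hx : T x i = 1) :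
    T y i = 0 := by
  refine RCLike.eq_zero_of_forall_norm_one_add_mul_le_one fun l hl => ?_
  calc ‖1 + l * T y i‖ = ‖T (x + l • y) i‖ := by simp [hx]
    _ ≤ ‖T (x + l • y)‖ := norm_le_pi_norm _ i
    _ ≤ ‖T‖ * ‖x + l • y‖ := T.le_opNorm _
    _ ≤ 1 := mul_le_one₀ hT (norm_nonneg _) (hxy l hl)

/-- Let `π : ℂ³ → ℂ³` (sup norm) be a linear projection of norm 1 onto the subspace
`{(x,y,x+y) : x,y ∈ ℂ}`.  Then `π` vanishes on `{0} × ℂ × {0}`. -/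
theorem stmt8 (π : (Fin 3 → ℂ) →L[ℂ] (Fin 3 → ℂ)) (hidem : π.comp π = π)
    (hnorm : ‖π‖ = 1)
    (hrange : Set.range π = {v : Fin 3 → ℂ | v 2 = v 0 + v 1}) :
    ∀ c : ℂ, π ![0, c, 0] = 0 := by
  have hfix : π ![1, 0, 1] = ![1, 0, 1] := by
    obtain ⟨u, hu⟩ : ![(1 : ℂ), 0, 1] ∈ Set.range π := by simp [hrange]
    rw [← hu, ← ContinuousLinearMap.comp_apply, hidem]
  have hline : ∀ l : ℂ, ‖l‖ ≤ 1 → ‖(![1, 0, 1] + l • ![0, 1, 0] : Fin 3 → ℂ)‖ ≤ 1 := fun l hl => by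
    rw [pi_norm_le_iff_of_nonneg zero_le_one]
    intro j
    fin_cases j <;> simp [hl]
  have hpeak : ∀ i : Fin 3, ![(1 : ℂ), 0, 1] i = 1 → π ![0, 1, 0] i = 0 := fun i hi =>
    π.apply_eq_zero_of_norm_add_smul_le_one hnorm.le hline (by rw [hfix, hi])
  have h0 := hpeak 0 rfl
  have h2 := hpeak 2 rfl
  have h1 : π ![0, 1, 0] 1 = 0 := by
    have hmem : π ![0, 1, 0] ∈ Set.range π := ⟨_, rfl⟩
    simp only [hrange, Set.mem_ofPred_eq, h0, h2, zero_add] at hmem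
    exact hmem.symm
  have hw : π ![0, 1, 0] = 0 := by
    funext j
    fin_cases j <;> assumption
  intro c
  have hc : (![0, c, 0] : Fin 3 → ℂ) = c • ![0, 1, 0] := by
    funext j
    fin_cases j <;> simp
  rw [hc, map_smul, hw, smul_zero]
end

section
/- c₀(ℕ) is not complemented in ℓ^∞(ℕ): there is no continuous linear projection from ℓ^∞(ℕ) onto the subspace c₀(ℕ). -/
/-!
Whitley's argument. If `π` were such a projection, `1 - π` would be a bounded operator on `ℓ^∞`
killing `c₀`. Coding the nodes of the binary tree by natural numbers, the branches give an
uncountable family of infinite subsets `A_x ⊆ ℕ` with pairwise finite intersections. A bounded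
functional `f` killing `c₀` is blind to finite modifications, so the `A_x` may be made disjoint,
whence `∑ ‖f 1_{A_x}‖ ≤ ‖f‖` over every finite set of branches and `f 1_{A_x} ≠ 0` for only
countably many `x`. Applying this to the coordinates of `1 - π` yields a branch with
`π 1_{A_x} = 1_{A_x}`, although `1_{A_x}` does not tend to `0`.
-/

open scoped ENNReal

open Filter Topology Set

theorem exists_pairwiseDisjoint_subset_finite_diff {α ι : Type*} [DecidableEq ι] {s : ι → Set α}
    (hs : Pairwise fun i j => (s i ∩ s j).Finite) (F : Finset ι) :
    ∃ t : ι → Set α, (∀ i, t i ⊆ s i ∧ (s i \ t i).Finite) ∧ (F : Set ι).PairwiseDisjoint t := by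
  refine ⟨fun i => s i \ ⋃ j ∈ F.erase i, s j, fun i => ⟨sdiff_subset, ?_⟩, ?_⟩
  · rw [sdiff_sdiff_right_self, inter_iUnion₂]
    exact (F.erase i).finite_toSet.biUnion fun j hj => hs (Finset.ne_of_mem_erase hj).symm
  · intro i hi j hj hij
    refine disjoint_left.mpr fun a hai haj => hai.2 ?_
    exact mem_biUnion (Finset.mem_erase.mpr ⟨hij.symm, hj⟩) haj.1

/- `prefixCodes x` is the set of codes of the nodes of the binary tree on the branch `x`; distinct
branches share only finitely many nodes. -/
def prefixCode (x : ℕ → Bool) (n : ℕ) : ℕ :=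
  Encodable.encode (List.ofFn fun i : Fin n => x i)

def prefixCodes (x : ℕ → Bool) : Set ℕ :=
  range (prefixCode x)

theorem prefixCodes_infinite (x : ℕ → Bool) : (prefixCodes x).Infinite := by
  refine infinite_range_of_injective fun n m h => ?_
  simpa using congrArg List.length (Encodable.encode_injective h)

theorem prefixCodes_inter_finite {x y : ℕ → Bool} (hxy : x ≠ y) :
    (prefixCodes x ∩ prefixCodes y).Finite := by
  obtain ⟨k, hk⟩ := Function.ne_iff.mp hxy
  refine ((finite_Iic k).image (prefixCode x)).subset ?_
  rintro _ ⟨⟨n, rfl⟩, ⟨m, hm⟩⟩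
  obtain ⟨rfl, hfun⟩ := Sigma.mk.inj_iff.mp (List.ofFn_inj'.mp (Encodable.encode_injective hm))
  refine ⟨m, mem_Iic.mpr (not_lt.mp fun hkm => hk ?_), rfl⟩
  exact (congrFun (eq_of_heq hfun) ⟨k, hkm⟩).symm

open Classical in
instance : Uncountable (ℕ → Bool) := by
  refine uncountable_iff_forall_not_surjective.mpr fun f hf => Function.cantor_surjective
    (fun n => {m | f n m}) fun s => ?_
  obtain ⟨n, hn⟩ := hf fun m => decide (m ∈ s)
  exact ⟨n, by ext m; simp [hn]⟩

section LInfty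

variable (𝕜 : Type*) [RCLike 𝕜] {α ι : Type*}

noncomputable def lpIndicator (s : Set α) : lp (fun _ : α => 𝕜) ∞ :=
  ⟨s.indicator 1, memℓp_infty ⟨1, by
    rintro _ ⟨a, rfl⟩
    by_cases ha : a ∈ s <;> simp [ha]⟩⟩

@[simp]
theorem coe_lpIndicator (s : Set α) : ⇑(lpIndicator 𝕜 s) = s.indicator 1 := rfl

variable {𝕜}

theorem norm_sum_smul_lpIndicator_le_one {F : Finset ι} {t : ι → Set α}
    (ht : (F : Set ι).PairwiseDisjoint t) {c : ι → 𝕜} (hc : ∀ i, ‖c i‖ ≤ 1) :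
    ‖∑ i ∈ F, c i • lpIndicator 𝕜 (t i)‖ ≤ 1 := by
  refine lp.norm_le_of_forall_le zero_le_one fun a => ?_
  simp only [lp.coeFn_sum, lp.coeFn_smul, Finset.sum_apply, Pi.smul_apply, coe_lpIndicator]
  by_cases ha : ∃ i ∈ F, a ∈ t i
  · obtain ⟨i, hi, hai⟩ := ha
    rw [Finset.sum_eq_single_of_mem i hi fun j hj hji =>
      by rw [indicator_of_notMem fun haj => hji (ht.elim_set hj hi a haj hai), smul_zero]]
    simpa [hai] using hc i
  · push Not at ha
    rw [Finset.sum_eq_zero fun i hi => by rw [indicator_of_notMem (ha i hi), smul_zero]]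
    simp

theorem map_lpIndicator_eq_of_finite_diff (f : lp (fun _ : α => 𝕜) ∞ →L[𝕜] 𝕜)
    (hf : ∀ g : lp (fun _ : α => 𝕜) ∞, (Function.support g).Finite → f g = 0)
    {s t : Set α} (hts : t ⊆ s) (hst : (s \ t).Finite) :
    f (lpIndicator 𝕜 s) = f (lpIndicator 𝕜 t) := by
  have hdiff : lpIndicator 𝕜 s - lpIndicator 𝕜 t = lpIndicator 𝕜 (s \ t) := by
    ext1
    simp only [lp.coeFn_sub, coe_lpIndicator, indicator_sdiff hts]
  rw [← sub_eq_zero, ← map_sub, hdiff]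
  exact hf _ (hst.subset support_indicator_subset)

theorem RCLike.exists_norm_le_one_mul_eq_norm (z : 𝕜) : ∃ θ : 𝕜, ‖θ‖ ≤ 1 ∧ θ * z = ‖z‖ := by
  refine ⟨starRingEnd 𝕜 z / ‖z‖, ?_, ?_⟩
  · rw [norm_div, RCLike.norm_conj, RCLike.norm_ofReal, abs_norm]
    exact div_self_le_one _
  · rw [div_mul_eq_mul_div, RCLike.conj_mul, sq, mul_self_div_self]

theorem sum_norm_map_lpIndicator_le (f : lp (fun _ : α => 𝕜) ∞ →L[𝕜] 𝕜)
    (hf : ∀ g : lp (fun _ : α => 𝕜) ∞, (Function.support g).Finite → f g = 0)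
    {s : ι → Set α} (hs : Pairwise fun i j => (s i ∩ s j).Finite) (F : Finset ι) :
    ∑ i ∈ F, ‖f (lpIndicator 𝕜 (s i))‖ ≤ ‖f‖ := by
  classical
  -- Shrinking the `s i` to disjoint `t i` does not change `f (1_{s i})`, and rotating each term by
  -- a unimodular `θ i` makes the sum of norms the value of `f` at a vector of norm at most `1`.
  obtain ⟨t, hts, ht⟩ := exists_pairwiseDisjoint_subset_finite_diff hs F
  choose θ hθ_le hθ using fun i => RCLike.exists_norm_le_one_mul_eq_norm (f (lpIndicator 𝕜 (s i)))
  have hsum : ((∑ i ∈ F, ‖f (lpIndicator 𝕜 (s i))‖ : ℝ) : 𝕜)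
      = f (∑ i ∈ F, θ i • lpIndicator 𝕜 (t i)) := by
    rw [map_sum, RCLike.ofReal_sum]
    refine Finset.sum_congr rfl fun i _ => ?_
    rw [map_smul, smul_eq_mul, ← map_lpIndicator_eq_of_finite_diff f hf (hts i).1 (hts i).2, hθ]
  calc ∑ i ∈ F, ‖f (lpIndicator 𝕜 (s i))‖
      = ‖((∑ i ∈ F, ‖f (lpIndicator 𝕜 (s i))‖ : ℝ) : 𝕜)‖ := by
        rw [RCLike.norm_ofReal, abs_of_nonneg (by positivity)]
    _ ≤ ‖f‖ * ‖∑ i ∈ F, θ i • lpIndicator 𝕜 (t i)‖ := hsum ▸ f.le_opNorm _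
    _ ≤ ‖f‖ := mul_le_of_le_one_right (norm_nonneg f) (norm_sum_smul_lpIndicator_le_one ht hθ_le)

theorem countable_setOf_map_lpIndicator_ne_zero (f : lp (fun _ : α => 𝕜) ∞ →L[𝕜] 𝕜)
    (hf : ∀ g : lp (fun _ : α => 𝕜) ∞, (Function.support g).Finite → f g = 0)
    {s : ι → Set α} (hs : Pairwise fun i j => (s i ∩ s j).Finite) :
    {i | f (lpIndicator 𝕜 (s i)) ≠ 0}.Countable := by
  have hsummable : Summable fun i => ‖f (lpIndicator 𝕜 (s i))‖ :=
    summable_of_sum_le (fun _ => norm_nonneg _) (sum_norm_map_lpIndicator_le f hf hs)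
  simpa [Function.support] using hsummable.countable_support

theorem countable_setOf_apply_lpIndicator_ne_zero [Countable α]
    (T : lp (fun _ : α => 𝕜) ∞ →L[𝕜] lp (fun _ : α => 𝕜) ∞)
    (hT : ∀ g : lp (fun _ : α => 𝕜) ∞, (Function.support g).Finite → T g = 0)
    {s : ι → Set α} (hs : Pairwise fun i j => (s i ∩ s j).Finite) :
    {i | T (lpIndicator 𝕜 (s i)) ≠ 0}.Countable := by
  have hcoord (a : α) := countable_setOf_map_lpIndicator_ne_zero
    ((lp.evalCLM 𝕜 _ ∞ a).comp T) (fun g hg => by simp [hT g hg]) hs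
  refine (countable_iUnion hcoord).mono fun i hi => ?_
  obtain ⟨a, ha⟩ := Function.ne_iff.mp fun h => hi (lp.ext h)
  exact mem_iUnion.mpr ⟨a, by simpa [lp.evalCLM] using ha⟩

theorem exists_apply_lpIndicator_eq_zero [Countable α] [Uncountable ι]
    (T : lp (fun _ : α => 𝕜) ∞ →L[𝕜] lp (fun _ : α => 𝕜) ∞)
    (hT : ∀ g : lp (fun _ : α => 𝕜) ∞, (Function.support g).Finite → T g = 0)
    {s : ι → Set α} (hs : Pairwise fun i j => (s i ∩ s j).Finite) :
    ∃ i, T (lpIndicator 𝕜 (s i)) = 0 := by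
  by_contra! h
  exact not_countable_univ ((countable_setOf_apply_lpIndicator_ne_zero T hT hs).mono fun i _ => h i)

theorem not_tendsto_lpIndicator_of_infinite {s : Set α} (hs : s.Infinite) :
    ¬ Tendsto (fun a => lpIndicator 𝕜 s a) cofinite (𝓝 0) := fun h =>
  hs <| (eventually_cofinite.mp (h.eventually_ne one_ne_zero.symm)).subset fun a ha => by simp [ha]

end LInfty

/-- `c₀(ℕ)` is not complemented in `ℓ^∞(ℕ)`: there is no continuous linear projection
from `ℓ^∞(ℕ)` onto the subspace of sequences tending to `0`. -/
theorem stmt9 :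
    ¬ ∃ π : lp (fun _ : ℕ => ℂ) ∞ →L[ℂ] lp (fun _ : ℕ => ℂ) ∞, π.comp π = π ∧
      Set.range π =
        {x : lp (fun _ : ℕ => ℂ) ∞ | Filter.Tendsto (fun n => x n) Filter.atTop (nhds 0)} := by
  rintro ⟨π, hidem, hrange⟩
  simp only [← Nat.cofinite_eq_atTop] at hrange
  have hfix : ∀ g ∈ range π, π g = g := by
    rintro _ ⟨g, rfl⟩
    exact congr($hidem g)
  have hker (g : lp (fun _ : ℕ => ℂ) ∞) (hg : (Function.support g).Finite) :
      (1 - π) g = 0 := by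
    have hgπ : g ∈ range π := hrange ▸ tendsto_nhds_of_eventually_eq
      (hg.eventually_cofinite_notMem.mono fun _ => Function.notMem_support.mp)
    simp [hfix g hgπ]
  obtain ⟨x, hx⟩ := exists_apply_lpIndicator_eq_zero _ hker fun _ _ => prefixCodes_inter_finite
  have hπx : lpIndicator ℂ (prefixCodes x) = π (lpIndicator ℂ (prefixCodes x)) := by
    simpa [sub_eq_zero] using hx
  have hmem : lpIndicator ℂ (prefixCodes x) ∈ range π := ⟨_, hπx.symm⟩
  rw [hrange] at hmem
  exact not_tendsto_lpIndicator_of_infinite (prefixCodes_infinite x) hmem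
end

section
/- For every a in the open unit ball B of ℓ^∞(I), the map φ_a defined coordinatewise by φ_a(f)(i) = (f(i) + a(i)) / (1 + conj(a(i)) · f(i)) maps B bijectively onto B, with inverse φ_{-a}. -/
open scoped ENNReal ComplexConjugate

/-!
The scalar identity `|1 + conj α z|² - |z + α|² = (1 - |z|²)(1 - |α|²)`, together with
`|1 + conj α z| ≤ 2`, gives `1 - |φ_α(z)|² ≥ (1 - |z|²)(1 - |α|²) / 4`. Coordinatewise this is a
margin depending only on `‖f‖` and `‖a‖`, so `φ_a(f)` stays bounded away from the unit sphere of
`ℓ^∞(I)`. That `φ_{-α}` inverts `φ_α` is a computation in each coordinate.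
-/

section Disc

open Complex

noncomputable def mobius (α z : ℂ) : ℂ := (z + α) / (1 + conj α * z)

lemma one_add_conj_mul_ne_zero {α z : ℂ} (hα : ‖α‖ < 1) (hz : ‖z‖ ≤ 1) :
    1 + conj α * z ≠ 0 := by
  have : ‖conj α * z‖ < 1 := by
    rw [norm_mul, RCLike.norm_conj]
    nlinarith [norm_nonneg α, norm_nonneg z]
  intro h
  rw [eq_neg_of_add_eq_zero_right h, norm_neg, norm_one] at this
  exact lt_irrefl _ this

lemma normSq_one_add_conj_mul_sub_normSq_add (α z : ℂ) :
    normSq (1 + conj α * z) - normSq (z + α) = (1 - normSq z) * (1 - normSq α) := by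
  simp only [normSq_apply, add_re, add_im, mul_re, mul_im, conj_re, conj_im, one_re, one_im]
  ring

lemma mobius_neg_mobius {α z : ℂ} (hα : ‖α‖ < 1) (hz : ‖z‖ ≤ 1) :
    mobius (-α) (mobius α z) = z := by
  have hd := one_add_conj_mul_ne_zero hα hz
  have hα' : 1 + conj α * -α ≠ 0 := one_add_conj_mul_ne_zero hα (by rw [norm_neg]; exact hα.le)
  have hnum : mobius α z + -α = z * (1 + conj α * -α) / (1 + conj α * z) := by
    rw [mobius, div_add' _ _ _ hd]; ring
  have hden : 1 + conj (-α) * mobius α z = (1 + conj α * -α) / (1 + conj α * z) := by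
    rw [mobius, map_neg, eq_div_iff hd]; field_simp; ring
  rw [mobius, hnum, hden, div_div_div_cancel_right₀ hd, mul_div_cancel_right₀ _ hα']

lemma normSq_mobius_le {α z : ℂ} (hα : ‖α‖ < 1) (hz : ‖z‖ < 1) :
    normSq (mobius α z) ≤ 1 - (1 - normSq z) * (1 - normSq α) / 4 := by
  have hd := one_add_conj_mul_ne_zero hα hz.le
  have hpos : 0 < normSq (1 + conj α * z) := normSq_pos.2 hd
  have hle : normSq (1 + conj α * z) ≤ 4 := by
    rw [normSq_eq_norm_sq]
    have : ‖1 + conj α * z‖ ≤ 2 := by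
      calc ‖1 + conj α * z‖ ≤ 1 + ‖α‖ * ‖z‖ := by
            simpa [norm_mul] using norm_add_le (1 : ℂ) (conj α * z)
        _ ≤ 2 := by nlinarith [norm_nonneg α, norm_nonneg z]
    nlinarith [norm_nonneg (1 + conj α * z)]
  have hnum : 0 ≤ (1 - normSq z) * (1 - normSq α) := by
    rw [normSq_eq_norm_sq, normSq_eq_norm_sq]
    exact mul_nonneg (by nlinarith [norm_nonneg z]) (by nlinarith [norm_nonneg α])
  have key := normSq_one_add_conj_mul_sub_normSq_add α z
  rw [mobius, normSq_div, div_le_iff₀ hpos]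
  nlinarith [div_le_div_of_nonneg_left hnum hpos hle]

lemma norm_mobius_le {α z : ℂ} {r s : ℝ} (hα : ‖α‖ ≤ r) (hz : ‖z‖ ≤ s) (hr : r < 1)
    (hs : s < 1) : ‖mobius α z‖ ≤ 1 - (1 - s ^ 2) * (1 - r ^ 2) / 8 := by
  have hα2 : ‖α‖ ^ 2 ≤ r ^ 2 := pow_le_pow_left₀ (norm_nonneg α) hα 2
  have hz2 : ‖z‖ ^ 2 ≤ s ^ 2 := pow_le_pow_left₀ (norm_nonneg z) hz 2
  have hr2 : r ^ 2 < 1 := by nlinarith [norm_nonneg α]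
  have hs2 : s ^ 2 < 1 := by nlinarith [norm_nonneg z]
  have hm := normSq_mobius_le (hα.trans_lt hr) (hz.trans_lt hs)
  rw [normSq_eq_norm_sq, normSq_eq_norm_sq, normSq_eq_norm_sq] at hm
  have hmargin : (1 - s ^ 2) * (1 - r ^ 2) ≤ (1 - ‖z‖ ^ 2) * (1 - ‖α‖ ^ 2) :=
    mul_le_mul (by linarith) (by linarith) (by linarith) (by linarith)
  refine le_of_sq_le_sq ?_ (by nlinarith)
  nlinarith [mul_nonneg (sub_nonneg.2 hs2.le) (sub_nonneg.2 hr2.le)]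

end Disc

section lp

variable {I : Type*}

lemma norm_mobius_apply_le {a f : lp (fun _ : I => ℂ) ∞} (ha : ‖a‖ < 1) (hf : ‖f‖ < 1) (i : I) :
    ‖mobius (a i) (f i)‖ ≤ 1 - (1 - ‖f‖ ^ 2) * (1 - ‖a‖ ^ 2) / 8 :=
  norm_mobius_le (lp.norm_apply_le_norm ENNReal.top_ne_zero a i)
    (lp.norm_apply_le_norm ENNReal.top_ne_zero f i) ha hf

noncomputable def ballMobius (a : lp (fun _ : I => ℂ) ∞) (ha : ‖a‖ < 1)
    (f : {f : lp (fun _ : I => ℂ) ∞ // ‖f‖ < 1}) : {f : lp (fun _ : I => ℂ) ∞ // ‖f‖ < 1} :=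
  ⟨⟨fun i => mobius (a i) ((f : lp (fun _ : I => ℂ) ∞) i),
      memℓp_infty ⟨_, Set.forall_mem_range.2 (norm_mobius_apply_le ha f.2)⟩⟩, by
    have hf : 1 - ‖(f : lp (fun _ : I => ℂ) ∞)‖ ^ 2 ∈ Set.Ioc 0 1 :=
      ⟨by nlinarith [f.2, norm_nonneg (f : lp (fun _ : I => ℂ) ∞)], by nlinarith⟩
    have ha' : 1 - ‖a‖ ^ 2 ∈ Set.Ioc 0 1 := ⟨by nlinarith [norm_nonneg a], by nlinarith⟩
    refine (lp.norm_le_of_forall_le ?_ (norm_mobius_apply_le ha f.2)).trans_lt ?_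
    · nlinarith [mul_le_one₀ hf.2 ha'.1.le ha'.2]
    · nlinarith [mul_pos hf.1 ha'.1]⟩

lemma ballMobius_neg_ballMobius (a : lp (fun _ : I => ℂ) ∞) (ha : ‖a‖ < 1) (hna : ‖-a‖ < 1)
    (f : {f : lp (fun _ : I => ℂ) ∞ // ‖f‖ < 1}) : ballMobius (-a) hna (ballMobius a ha f) = f :=
  Subtype.ext <| lp.ext <| funext fun i =>
    mobius_neg_mobius ((lp.norm_apply_le_norm ENNReal.top_ne_zero a i).trans_lt ha)
      (lp.norm_apply_le_norm ENNReal.top_ne_zero _ i |>.trans f.2.le)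

end lp

/-- For every `a` in the open unit ball `B` of `ℓ^∞(I)`, the map `φ_a` defined
coordinatewise by `φ_a(f)(i) = (f(i) + a(i)) / (1 + conj(a(i)) f(i))` maps `B`
bijectively onto `B`, with inverse `φ_{-a}`. -/
theorem stmt10 {I : Type*} (a : lp (fun _ : I => ℂ) ∞) (ha : ‖a‖ < 1) :
    ∃ φ ψ : {f : lp (fun _ : I => ℂ) ∞ // ‖f‖ < 1} →
            {f : lp (fun _ : I => ℂ) ∞ // ‖f‖ < 1},
      (∀ f i, (φ f : lp (fun _ : I => ℂ) ∞) i =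
          ((f : lp (fun _ : I => ℂ) ∞) i + a i) /
            (1 + conj (a i) * (f : lp (fun _ : I => ℂ) ∞) i)) ∧
      (∀ f i, (ψ f : lp (fun _ : I => ℂ) ∞) i =
          ((f : lp (fun _ : I => ℂ) ∞) i + (-a) i) /
            (1 + conj ((-a) i) * (f : lp (fun _ : I => ℂ) ∞) i)) ∧
      Function.LeftInverse ψ φ ∧ Function.RightInverse ψ φ := by
  have hna : ‖-a‖ < 1 := by rwa [norm_neg]
  refine ⟨ballMobius a ha, ballMobius (-a) hna, fun _ _ => rfl, fun _ _ => rfl,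
    ballMobius_neg_ballMobius a ha hna, fun f => ?_⟩
  simpa only [neg_neg] using ballMobius_neg_ballMobius (-a) hna (by rwa [neg_neg]) f
end

section
/- For every a in the open unit ball B of c₀(I), the coordinatewise Möbius map φ_a(f)(i) = (f(i) + a(i)) / (1 + conj(a(i)) f(i)) sends c₀(I)-elements of B into c₀(I), and is a bijection of B onto itself. -/
/-!
The identity `‖1 + conj α * z‖² - ‖z + α‖² = (1 - ‖α‖²) (1 - ‖z‖²)` shows that the disc
automorphism `z ↦ (z + α) / (1 + conj α * z)` sends `‖z‖ ≤ s` into `‖·‖ ≤ (r + s) / (1 + r s)`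
whenever `‖α‖ ≤ r < 1`, and `(r + s) / (1 + r s) < 1` for `s < 1`. With `r = ‖a‖`, `s = ‖f‖` the
bound is uniform in the coordinate, so `φ_a` maps the open unit ball of `c₀(I)` into itself. The
denominator never vanishes and the map is continuous at `(0, 0)` with value `0`, so `φ_a f` is again
continuous and vanishes at infinity; coordinatewise, `φ_{-a}` inverts `φ_a`.
-/

open scoped ZeroAtInfty ComplexConjugate

namespace Complex

noncomputable def mobius (α z : ℂ) : ℂ := (z + α) / (1 + conj α * z)

theorem norm_one_add_conj_mul_sq_sub (α z : ℂ) :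
    ‖1 + conj α * z‖ ^ 2 - ‖z + α‖ ^ 2 = (1 - ‖α‖ ^ 2) * (1 - ‖z‖ ^ 2) := by
  simp only [Complex.sq_norm, normSq_apply, add_re, add_im, mul_re, mul_im, one_re, one_im, conj_re,
    conj_im]
  ring

theorem one_add_conj_mul_ne_zero {α z : ℂ} (hα : ‖α‖ < 1) (hz : ‖z‖ ≤ 1) :
    1 + conj α * z ≠ 0 := by
  intro h
  have h1 : ‖conj α * z‖ = 1 := by rw [eq_neg_of_add_eq_zero_right h, norm_neg, norm_one]
  rw [norm_mul, RCLike.norm_conj] at h1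
  nlinarith [norm_nonneg α, norm_nonneg z]

theorem continuousAt_mobius {p : ℂ × ℂ} (hp : 1 + conj p.1 * p.2 ≠ 0) :
    ContinuousAt (fun q : ℂ × ℂ => mobius q.1 q.2) p := by
  unfold mobius
  fun_prop (disch := exact hp)

theorem norm_mobius_le {α z : ℂ} {r s : ℝ} (hα : ‖α‖ ≤ r) (hz : ‖z‖ ≤ s) (hr : r < 1)
    (hs : s ≤ 1) : ‖mobius α z‖ ≤ (r + s) / (1 + r * s) := by
  set D := ‖1 + conj α * z‖
  have hr0 : 0 ≤ r := (norm_nonneg α).trans hα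
  have hs0 : 0 ≤ s := (norm_nonneg z).trans hz
  have hD : 0 < D := norm_pos_iff.2 (one_add_conj_mul_ne_zero (hα.trans_lt hr) (hz.trans hs))
  have hDle : D ≤ 1 + r * s :=
    calc D ≤ ‖(1 : ℂ)‖ + ‖conj α * z‖ := norm_add_le _ _
      _ = 1 + ‖α‖ * ‖z‖ := by rw [norm_one, norm_mul, RCLike.norm_conj]
      _ ≤ 1 + r * s := by gcongr
  have hcross : D ^ 2 * ((1 - r ^ 2) * (1 - s ^ 2)) ≤
      (1 + r * s) ^ 2 * ((1 - ‖α‖ ^ 2) * (1 - ‖z‖ ^ 2)) := by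
    have h1 : 1 - r ^ 2 ≤ 1 - ‖α‖ ^ 2 := by gcongr
    have h2 : 1 - s ^ 2 ≤ 1 - ‖z‖ ^ 2 := by gcongr
    exact mul_le_mul (pow_le_pow_left₀ hD.le hDle 2)
      (mul_le_mul h1 h2 (by nlinarith) (by nlinarith)) (mul_nonneg (by nlinarith) (by nlinarith))
      (by positivity)
  rw [mobius, norm_div, div_le_div_iff₀ hD (by positivity)]
  refine (pow_le_pow_iff_left₀ (by positivity) (by positivity) two_ne_zero).1 ?_
  -- `(1 + r s)² - (r + s)² = (1 - r²) (1 - s²)`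
  linear_combination hcross - (1 + r * s) ^ 2 * norm_one_add_conj_mul_sq_sub α z

theorem mobius_neg_mobius {α z : ℂ} (hα : ‖α‖ ≠ 1) (hz : 1 + conj α * z ≠ 0) :
    mobius (-α) (mobius α z) = z := by
  have hc : 1 - conj α * α ≠ 0 := by
    rw [conj_mul', sub_ne_zero]
    have : ‖α‖ ^ 2 ≠ 1 := by rwa [Ne, pow_eq_one_iff_of_nonneg (norm_nonneg α) two_ne_zero]
    exact_mod_cast this.symm
  have hnum : (z + α) / (1 + conj α * z) + -α = z * (1 - conj α * α) / (1 + conj α * z) := by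
    rw [eq_div_iff hz]
    linear_combination div_mul_cancel₀ (z + α) hz
  have hden : 1 + -conj α * ((z + α) / (1 + conj α * z)) =
      (1 - conj α * α) / (1 + conj α * z) := by
    rw [eq_div_iff hz]
    linear_combination -conj α * div_mul_cancel₀ (z + α) hz
  rw [mobius, mobius, map_neg, hnum, hden, mul_div_assoc,
    mul_div_cancel_right₀ _ (div_ne_zero hc hz)]

end Complex

namespace ZeroAtInftyContinuousMap

variable {I : Type*} [TopologicalSpace I]

theorem norm_apply_le_s11 {β : Type*} [SeminormedAddCommGroup β] (f : C₀(I, β)) (i : I) :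
    ‖f i‖ ≤ ‖f‖ :=
  f.toBCF.norm_coe_le_norm i

theorem norm_le {β : Type*} [SeminormedAddCommGroup β] {f : C₀(I, β)} {C : ℝ} (hC : 0 ≤ C) :
    ‖f‖ ≤ C ↔ ∀ i, ‖f i‖ ≤ C :=
  BoundedContinuousFunction.norm_le hC

theorem one_add_conj_mul_ne_zero {a f : C₀(I, ℂ)} (ha : ‖a‖ < 1) (hf : ‖f‖ < 1) (i : I) :
    1 + conj (a i) * f i ≠ 0 :=
  Complex.one_add_conj_mul_ne_zero ((a.norm_apply_le_s11 i).trans_lt ha)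
    ((f.norm_apply_le_s11 i).trans hf.le)

noncomputable def mobius (a f : C₀(I, ℂ)) (ha : ‖a‖ < 1) (hf : ‖f‖ < 1) : C₀(I, ℂ) where
  toFun i := Complex.mobius (a i) (f i)
  continuous_toFun := continuous_iff_continuousAt.2 fun i =>
    (Complex.continuousAt_mobius (one_add_conj_mul_ne_zero ha hf i)).comp
      (a.continuous.prodMk f.continuous).continuousAt
  zero_at_infty' := by
    have h0 : 1 + conj (0 : ℂ) * 0 ≠ 0 := by simp
    simpa [Complex.mobius, Function.comp_def] using
      (Complex.continuousAt_mobius (p := (0, 0)) h0).tendsto.comp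
        (a.zero_at_infty'.prodMk_nhds f.zero_at_infty')

@[simp]
theorem mobius_apply {a f : C₀(I, ℂ)} (ha : ‖a‖ < 1) (hf : ‖f‖ < 1) (i : I) :
    mobius a f ha hf i = Complex.mobius (a i) (f i) :=
  rfl

theorem norm_mobius_lt {a f : C₀(I, ℂ)} (ha : ‖a‖ < 1) (hf : ‖f‖ < 1) :
    ‖mobius a f ha hf‖ < 1 := by
  have hbound : (‖a‖ + ‖f‖) / (1 + ‖a‖ * ‖f‖) < 1 := by
    rw [div_lt_one (by positivity)]
    nlinarith [norm_nonneg a, norm_nonneg f]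
  refine lt_of_le_of_lt ((norm_le (by positivity)).2 fun i => ?_) hbound
  exact Complex.norm_mobius_le (a.norm_apply_le_s11 i) (f.norm_apply_le_s11 i) ha hf.le

theorem mobius_neg_mobius {a f : C₀(I, ℂ)} (ha : ‖a‖ < 1) (hf : ‖f‖ < 1) :
    mobius (-a) (mobius a f ha hf) (by rwa [norm_neg]) (norm_mobius_lt ha hf) = f :=
  ext fun i => Complex.mobius_neg_mobius ((a.norm_apply_le_s11 i).trans_lt ha).ne
    (one_add_conj_mul_ne_zero ha hf i)

end ZeroAtInftyContinuousMap

open ZeroAtInftyContinuousMap in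
theorem stmt11_general {I : Type*} [TopologicalSpace I]
    (a : C₀(I, ℂ)) (ha : ‖a‖ < 1) :
    ∃ φ ψ : {f : C₀(I, ℂ) // ‖f‖ < 1} → {f : C₀(I, ℂ) // ‖f‖ < 1},
      (∀ f i, (φ f : C₀(I, ℂ)) i =
          ((f : C₀(I, ℂ)) i + a i) / (1 + conj (a i) * (f : C₀(I, ℂ)) i)) ∧
      (∀ f i, (ψ f : C₀(I, ℂ)) i =
          ((f : C₀(I, ℂ)) i - a i) / (1 + conj (-a i) * (f : C₀(I, ℂ)) i)) ∧
      Function.LeftInverse ψ φ ∧ Function.RightInverse ψ φ := by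
  have ha' : ‖-a‖ < 1 := by rwa [norm_neg]
  refine ⟨fun f => ⟨mobius a f ha f.2, norm_mobius_lt ha f.2⟩,
    fun f => ⟨mobius (-a) f ha' f.2, norm_mobius_lt ha' f.2⟩,
    fun f i => rfl, fun f i => ?_, fun f => Subtype.ext (mobius_neg_mobius ha f.2), fun f => ?_⟩
  · simp [Complex.mobius, sub_eq_add_neg]
  · refine Subtype.ext (ext fun i => ?_)
    simpa using DFunLike.congr_fun (mobius_neg_mobius ha' f.2) i

/-- For every `a` in the open unit ball `B` of `c₀(I)`, the coordinatewise Möbius map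
`φ_a(f)(i) = (f(i) + a(i)) / (1 + conj(a(i)) f(i))` sends `c₀(I)`-elements of `B` into
`c₀(I)`, and is a bijection of `B` onto itself (with inverse `φ_{-a}`). -/
theorem stmt11 {I : Type*} [TopologicalSpace I] [DiscreteTopology I]
    (a : C₀(I, ℂ)) (ha : ‖a‖ < 1) :
    ∃ φ ψ : {f : C₀(I, ℂ) // ‖f‖ < 1} → {f : C₀(I, ℂ) // ‖f‖ < 1},
      (∀ f i, (φ f : C₀(I, ℂ)) i =
          ((f : C₀(I, ℂ)) i + a i) / (1 + conj (a i) * (f : C₀(I, ℂ)) i)) ∧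
      (∀ f i, (ψ f : C₀(I, ℂ)) i =
          ((f : C₀(I, ℂ)) i - a i) / (1 + conj (-a i) * (f : C₀(I, ℂ)) i)) ∧
      Function.LeftInverse ψ φ ∧ Function.RightInverse ψ φ :=
  stmt11_general a ha
end

section
/- (Cartan uniqueness application) Let B be the open unit ball of a complex Banach space E, and let φ : B → B be holomorphic with φ(0) = 0 and φ'(0) = id_E. Then φ = id_B. -/
/-!
Let `P` be the first homogeneous term of degree `k ≥ 2` in the Taylor expansion of `φ` at `0`,
so that `φ w = w + P w + O(‖w‖ ^ (k + 1))`. Since `P u - P w = O(‖w‖ ^ (k - 1) * ‖u - w‖)` and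
`2 * k - 1 ≥ k + 1`, iterating gives `φ^[n] w = w + n • P w + O(‖w‖ ^ (k + 1))`. On the complex
line through `z ∈ B`, the Cauchy estimate for the `k`-th derivative at `0` of
`t ↦ φ^[n] (t • z) - t • z`, which is bounded by `2` on the unit circle, gives `n * ‖P z‖ ≤ 2`
for every `n`; hence `P = 0`. So every Taylor term of `φ` of degree at least `2` vanishes,
`φ = id` near `0`, and the identity theorem spreads this over the connected ball.
-/

open Metric Asymptotics Filter Topology Set

theorem isBigO_norm_pow_norm_pow_of_le {E : Type*} [NormedAddCommGroup E] {m n : ℕ} (h : m ≤ n) :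
    (fun x : E => ‖x‖ ^ n) =O[𝓝 0] fun x => ‖x‖ ^ m := by
  rcases h.eq_or_lt with rfl | h
  · exact isBigO_refl _ _
  · exact (isLittleO_norm_pow_norm_pow h).isBigO

section NontriviallyNormedField

variable {𝕜 E F : Type*} [NontriviallyNormedField 𝕜] [NormedAddCommGroup E] [NormedSpace 𝕜 E]
  [NormedAddCommGroup F] [NormedSpace 𝕜 F]

theorem AnalyticOnNhd.iterate {f : E → E} {s : Set E} (hf : AnalyticOnNhd 𝕜 f s)
    (hs : MapsTo f s s) (n : ℕ) : AnalyticOnNhd 𝕜 f^[n] s := by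
  induction n with
  | zero => exact analyticOnNhd_id
  | succ n ih => rw [Function.iterate_succ']; exact hf.comp ih (hs.iterate n)

namespace ContinuousMultilinearMap

variable {k : ℕ} (f : E [×k]→L[𝕜] F)

theorem isBigO_apply_diag : (fun w => f fun _ => w) =O[𝓝 0] fun w => ‖w‖ ^ k :=
  .of_bound ‖f‖ <| .of_forall fun w => by
    simpa using f.le_opNorm_mul_pow_card_of_le (pi_norm_const_le w)

theorem apply_diag_smul (c : 𝕜) (w : E) : (f fun _ => c • w) = c ^ k • f fun _ => w := by
  simpa using f.map_smul_univ (fun _ => c) fun _ => w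

theorem isBigO_apply_diag_sub_apply_diag {α : Type*} {l : Filter α} {u v : α → E}
    (huv : u =O[l] v) :
    (fun x => f (fun _ => u x) - f (fun _ => v x)) =O[l]
      fun x => ‖v x‖ ^ (k - 1) * ‖u x - v x‖ := by
  obtain ⟨C, hC⟩ := huv.bound
  refine .of_bound (‖f‖ * k * max C 1 ^ (k - 1)) ?_
  filter_upwards [hC] with x hx
  have hmax : max ‖u x‖ ‖v x‖ ≤ max C 1 * ‖v x‖ :=
    max_le (hx.trans (by gcongr; exact le_max_left _ _))
      (le_mul_of_one_le_left (norm_nonneg _) (le_max_right _ _))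
  calc ‖f (fun _ => u x) - f (fun _ => v x)‖
      ≤ ‖f‖ * k * max ‖u x‖ ‖v x‖ ^ (k - 1) * ‖u x - v x‖ := by
        have hmax' := max_le_max (pi_norm_const_le (ι := Fin k) (u x))
          (pi_norm_const_le (ι := Fin k) (v x))
        have hsub : ‖(fun _ : Fin k => u x) - fun _ => v x‖ ≤ ‖u x - v x‖ :=
          pi_norm_const_le (u x - v x)
        have := f.norm_image_sub_le (fun _ => u x) (fun _ => v x)
        rw [Fintype.card_fin] at this
        exact this.trans (by gcongr)
    _ ≤ ‖f‖ * k * (max C 1 * ‖v x‖) ^ (k - 1) * ‖u x - v x‖ := by gcongr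
    _ = ‖f‖ * k * max C 1 ^ (k - 1) * ‖‖v x‖ ^ (k - 1) * ‖u x - v x‖‖ := by
        rw [Real.norm_of_nonneg (by positivity), mul_pow]; ring

theorem isBigO_iterate_sub_sub_nsmul_apply_diag {φ : E → E} (f : E [×k]→L[𝕜] E) (hk : 2 ≤ k)
    (hφ : (fun w => φ w - w - f fun _ => w) =O[𝓝 0] fun w => ‖w‖ ^ (k + 1)) (n : ℕ) :
    (fun w => φ^[n] w - w - n • f fun _ => w) =O[𝓝 0] fun w => ‖w‖ ^ (k + 1) := by
  induction n with
  | zero => simpa using isBigO_zero _ _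
  | succ n ih =>
    set u := φ^[n]
    have hu_sub : (fun w => u w - w) =O[𝓝 0] fun w => ‖w‖ ^ k := by
      refine ((ih.trans (isBigO_norm_pow_norm_pow_of_le k.le_succ)).add
        (f.isBigO_apply_diag.const_smul_left (n : 𝕜))).congr_left fun w => ?_
      simp [Nat.cast_smul_eq_nsmul]
    have hu : u =O[𝓝 0] id := by
      have h₀ : (fun w => u w - w) =O[𝓝 0] id := isBigO_norm_right.mp <| by
        simpa using hu_sub.trans (isBigO_norm_pow_norm_pow_of_le (by omega : 1 ≤ k))
      exact (h₀.add (isBigO_refl id _)).congr_left fun w => by simp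
    have hφu : (fun w => φ (u w) - u w - f fun _ => u w) =O[𝓝 0] fun w => ‖w‖ ^ (k + 1) :=
      (hφ.comp_tendsto (hu.trans_tendsto tendsto_id)).trans (hu.norm_norm.pow (k + 1))
    have hPu : (fun w => (f fun _ => u w) - f fun _ => w) =O[𝓝 0] fun w => ‖w‖ ^ (k + 1) := by
      refine (f.isBigO_apply_diag_sub_apply_diag hu).trans ?_
      refine ((isBigO_refl (fun w : E => ‖w‖ ^ (k - 1)) _).mul hu_sub.norm_left).trans ?_
      simpa [← pow_add] using isBigO_norm_pow_norm_pow_of_le (by omega : k + 1 ≤ k - 1 + k)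
    refine ((hφu.add hPu).add ih).congr_left fun w => ?_
    rw [Function.iterate_succ_apply', succ_nsmul]
    abel

end ContinuousMultilinearMap

theorem HasFPowerSeriesAt.apply_eq_zero_of_isBigO {f : E → F} {p : FormalMultilinearSeries 𝕜 E F}
    {k : ℕ} (hf : HasFPowerSeriesAt f p 0) (h : f =O[𝓝 0] fun y => ‖y‖ ^ (k + 1)) :
    ∀ j ≤ k, ∀ y, (p j fun _ => y) = 0 := by
  intro j
  induction j using Nat.strong_induction_on with
  | _ j ih =>
    intro hj
    have hsum : p.partialSum (j + 1) = fun y => p j fun _ => y := by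
      funext z
      rw [FormalMultilinearSeries.partialSum, Finset.sum_range_succ,
        Finset.sum_eq_zero fun i hi =>
          ih i (Finset.mem_range.mp hi) ((Finset.mem_range.mp hi).le.trans hj) z,
        zero_add]
    have := (h.trans (isBigO_norm_pow_norm_pow_of_le (by omega))).sub
      (hf.isBigO_sub_partialSum_pow (j + 1))
    exact IsBigO.continuousMultilinearMap_apply_eq_zero (by simpa [hsum] using this)

theorem HasFPowerSeriesAt.apply_one_diag {f : E → F} {p : FormalMultilinearSeries 𝕜 E F} {x : E}
    (hf : HasFPowerSeriesAt f p x) (y : E) : (p 1 fun _ => y) = fderiv 𝕜 f x y := by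
  rw [hf.fderiv_eq, continuousMultilinearCurryFin1_apply]
  congr

theorem iteratedDeriv_eq_zero_of_isBigO [CompleteSpace F] {f : 𝕜 → F} (hf : AnalyticAt 𝕜 f 0)
    {k : ℕ} (h : f =O[𝓝 0] fun t => ‖t‖ ^ (k + 1)) : iteratedDeriv k f 0 = 0 := by
  obtain ⟨p, r, hp⟩ := hf
  rw [iteratedDeriv_eq_iteratedFDeriv, ← hp.factorial_smul,
    hp.hasFPowerSeriesAt.apply_eq_zero_of_isBigO h k le_rfl, smul_zero]

end NontriviallyNormedField

section ComplexBanach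

variable {E : Type*} [NormedAddCommGroup E] [NormedSpace ℂ E] [CompleteSpace E]

theorem Complex.norm_le_div_pow_of_isBigO_sub_pow_smul {h : ℂ → E} {R C : ℝ} {k : ℕ} {v : E}
    (hR : 0 < R) (hd : DifferentiableOn ℂ h (closedBall 0 R))
    (hC : ∀ t ∈ sphere (0 : ℂ) R, ‖h t‖ ≤ C)
    (hv : (fun t => h t - t ^ k • v) =O[𝓝 0] fun t => ‖t‖ ^ (k + 1)) : ‖v‖ ≤ C / R ^ k := by
  have hh : AnalyticAt ℂ h 0 := hd.analyticAt (closedBall_mem_nhds 0 hR)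
  have hmon : AnalyticAt ℂ (fun t : ℂ => t ^ k • v) 0 := by fun_prop
  have hderiv : iteratedDeriv k h 0 = k.factorial • v := by
    have h0 := iteratedDeriv_eq_zero_of_isBigO (hh.sub hmon) hv
    rw [iteratedDeriv_sub hh.contDiffAt hmon.contDiffAt, sub_eq_zero] at h0
    rw [h0, iteratedDeriv_smul_const (by fun_prop), iteratedDeriv_fun_pow_zero, if_pos rfl,
      Nat.cast_smul_eq_nsmul]
  have := Complex.norm_iteratedDeriv_le_of_forall_mem_sphere_norm_le k hR
    (hd.mono closure_ball_subset_closedBall).diffContOnCl hC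
  rw [hderiv, RCLike.norm_nsmul ℂ, nsmul_eq_mul, mul_div_assoc] at this
  exact le_of_mul_le_mul_left this (by positivity)

namespace ContinuousMultilinearMap

variable {k : ℕ} (f : E [×k]→L[ℂ] E)

theorem norm_nsmul_apply_diag_le_two_of_mapsTo_ball {φ : E → E}
    (hφ : AnalyticOnNhd ℂ φ (ball 0 1)) (hmap : MapsTo φ (ball 0 1) (ball 0 1)) (hk : 2 ≤ k)
    (hf : (fun w => φ w - w - f fun _ => w) =O[𝓝 0] fun w => ‖w‖ ^ (k + 1))
    {z : E} (hz : z ∈ ball 0 1) (n : ℕ) : ‖n • f fun _ => z‖ ≤ 2 := by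
  have hmem : ∀ t ∈ closedBall (0 : ℂ) 1, t • z ∈ ball (0 : E) 1 := fun t ht => by
    rw [mem_closedBall_zero_iff] at ht
    rw [mem_ball_zero_iff] at hz
    rw [mem_ball_zero_iff, norm_smul]
    exact (mul_le_of_le_one_left (norm_nonneg z) ht).trans_lt hz
  have hd : DifferentiableOn ℂ (fun t : ℂ => φ^[n] (t • z) - t • z) (closedBall 0 1) :=
    fun t ht => ((((hφ.iterate hmap n) _ (hmem t ht)).differentiableAt.comp t
      (differentiableAt_id.smul_const z)).sub
        (differentiableAt_id.smul_const z)).differentiableWithinAt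
  have hC : ∀ t ∈ sphere (0 : ℂ) 1, ‖φ^[n] (t • z) - t • z‖ ≤ 2 := fun t ht => by
    have htz := hmem t (sphere_subset_closedBall ht)
    have hφtz := hmap.iterate n htz
    rw [mem_ball_zero_iff] at htz hφtz
    linarith [norm_sub_le (φ^[n] (t • z)) (t • z)]
  have hslice : (fun t : ℂ => t • z) =O[𝓝 0] fun t => t :=
    .of_bound ‖z‖ <| .of_forall fun t => by rw [norm_smul, mul_comm]
  have hv : (fun t : ℂ => (φ^[n] (t • z) - t • z) - t ^ k • n • f fun _ => z) =O[𝓝 0]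
      fun t => ‖t‖ ^ (k + 1) := by
    refine (((f.isBigO_iterate_sub_sub_nsmul_apply_diag hk hf n).comp_tendsto
      (hslice.trans_tendsto tendsto_id)).trans (hslice.norm_norm.pow (k + 1))).congr_left
      fun t => ?_
    simp [apply_diag_smul, smul_comm (t ^ k)]
  simpa using Complex.norm_le_div_pow_of_isBigO_sub_pow_smul one_pos hd hC hv

theorem apply_diag_eq_zero_of_mapsTo_ball {φ : E → E}
    (hφ : AnalyticOnNhd ℂ φ (ball 0 1)) (hmap : MapsTo φ (ball 0 1) (ball 0 1)) (hk : 2 ≤ k)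
    (hf : (fun w => φ w - w - f fun _ => w) =O[𝓝 0] fun w => ‖w‖ ^ (k + 1)) (y : E) :
    (f fun _ => y) = 0 := by
  have hball : ∀ z ∈ ball (0 : E) 1, (f fun _ => z) = 0 := fun z hz => by
    by_contra hne
    obtain ⟨n, hn⟩ := exists_nat_gt (2 / ‖f fun _ => z‖)
    have := f.norm_nsmul_apply_diag_le_two_of_mapsTo_ball hφ hmap hk hf hz n
    rw [RCLike.norm_nsmul ℂ, nsmul_eq_mul, ← le_div_iff₀ (norm_pos_iff.mpr hne)] at this
    linarith
  refine IsBigO.continuousMultilinearMap_apply_eq_zero ((isBigO_zero _ _).congr' ?_ .rfl) y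
  filter_upwards [ball_mem_nhds (0 : E) one_pos] with z hz using (hball z hz).symm

end ContinuousMultilinearMap

theorem HasFPowerSeriesAt.partialSum_eq_id_of_mapsTo_ball {φ : E → E}
    {p : FormalMultilinearSeries ℂ E E} (hp : HasFPowerSeriesAt φ p 0)
    (hφ : AnalyticOnNhd ℂ φ (ball 0 1)) (hmap : MapsTo φ (ball 0 1) (ball 0 1)) (h0 : φ 0 = 0)
    (hd : fderiv ℂ φ 0 = ContinuousLinearMap.id ℂ E) {n : ℕ} (hn : 2 ≤ n) :
    p.partialSum n = id := by
  induction n, hn using Nat.le_induction with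
  | base =>
    funext y
    simp [FormalMultilinearSeries.partialSum, Finset.sum_range_succ, hp.coeff_zero, h0,
      hp.apply_one_diag, hd]
  | succ n hn ih =>
    have hstep : p.partialSum (n + 1) = fun y => y + p n fun _ => y := by
      funext y
      rw [FormalMultilinearSeries.partialSum, Finset.sum_range_succ,
        ← FormalMultilinearSeries.partialSum, ih, id]
    have hO := hp.isBigO_sub_partialSum_pow (n + 1)
    simp only [hstep, zero_add, ← sub_sub] at hO
    rw [hstep]
    funext y
    simp [(p n).apply_diag_eq_zero_of_mapsTo_ball hφ hmap hn hO y]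

end ComplexBanach

/-- Cartan's uniqueness theorem: if `B` is the open unit ball of a complex Banach space
`E` and `φ : B → B` is holomorphic with `φ(0) = 0` and `φ'(0) = id`, then `φ = id` on
`B`. -/
theorem stmt14 {E : Type*} [NormedAddCommGroup E] [NormedSpace ℂ E] [CompleteSpace E]
    (φ : E → E) (hφ : AnalyticOnNhd ℂ φ (ball 0 1))
    (hmap : Set.MapsTo φ (ball 0 1) (ball 0 1)) (h0 : φ 0 = 0)
    (hd : fderiv ℂ φ 0 = ContinuousLinearMap.id ℂ E) :
    Set.EqOn φ id (ball 0 1) := by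
  obtain ⟨p, hp⟩ := hφ 0 (mem_ball_self one_pos)
  have heq : φ =ᶠ[𝓝 0] id := by
    filter_upwards [hp.tendsto_partialSum] with y hy
    refine tendsto_nhds_unique (by simpa using hy) (tendsto_atTop_of_eventually_const (i₀ := 2) ?_)
    intro n hn
    rw [hp.partialSum_eq_id_of_mapsTo_ball hφ hmap h0 hd hn, id]
  exact hφ.eqOn_of_preconnected_of_eventuallyEq analyticOnNhd_id
    (convex_ball 0 1).isPreconnected (mem_ball_self one_pos) heq
end

section
/- Under the hypotheses of Theorem 1 (f : B₁ → B₂ holomorphic, f(0)=0, f'(0) an isometry, π a norm-1 projection onto f'(0)(E₁)), the map r : B₂ → B₂ defined by r(z) = π(z) + ψ(π(z)), where ψ(y) = (id − π)(f((f'(0))⁻¹ y)), is a holomorphic retraction of B₂ onto f(B₁): r maps B₂ into f(B₁), and r(w) = w for all w ∈ f(B₁). -/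
/-!
On the ball, `π (f (g (π z))) = π z` because `π ∘ f = f'(0)`, so the correction term collapses and
`r = f ∘ L` with `L = (f'(0))⁻¹ ∘ π` continuous linear of norm at most `‖π‖ = 1`. Hence `r` is
holomorphic with values in `f(B₁)`, and `L ∘ f = id` on `B₁` makes it a retraction.
-/

open Metric

theorem LinearIsometry.exists_continuousLinearMap_comp_eq {𝕜 E F G : Type*}
    [NontriviallyNormedField 𝕜] [NormedAddCommGroup E] [NormedSpace 𝕜 E]
    [SeminormedAddCommGroup F] [NormedSpace 𝕜 F] [SeminormedAddCommGroup G] [NormedSpace 𝕜 G]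
    (D : E →ₗᵢ[𝕜] F) (π : G →L[𝕜] F) (hπ : ∀ z, π z ∈ LinearMap.range D.toLinearMap) :
    ∃ L : G →L[𝕜] E, ∀ z, D (L z) = π z :=
  ⟨(D.equivRange.symm : _ →L[𝕜] E).comp (π.codRestrict _ hπ), fun z =>
    (D.equivRange_apply_coe _).symm.trans
      (congrArg Subtype.val (D.equivRange.apply_symm_apply ⟨π z, hπ z⟩))⟩

theorem stmt16_general {E₁ E₂ : Type*}
    [NormedAddCommGroup E₁] [NormedSpace ℂ E₁]
    [NormedAddCommGroup E₂] [NormedSpace ℂ E₂]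
    (f : E₁ → E₂) (hf : AnalyticOnNhd ℂ f (ball 0 1))
    (hmap : Set.MapsTo f (ball 0 1) (ball 0 1))
    (hiso : ∀ X : E₁, ‖fderiv ℂ f 0 X‖ = ‖X‖)
    (π : E₂ →L[ℂ] E₂) (hnorm : ‖π‖ = 1)
    (hrange : Set.range π = Set.range (fderiv ℂ f 0))
    (g : E₂ → E₁) (hg : ∀ x : E₁, g (fderiv ℂ f 0 x) = x)
    (hπf : ∀ z ∈ ball (0 : E₁) 1, π (f z) = fderiv ℂ f 0 z)
    (r : E₂ → E₂) (hr : ∀ z : E₂, r z = π z + (f (g (π z)) - π (f (g (π z))))) :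
    AnalyticOnNhd ℂ r (ball 0 1) ∧ Set.MapsTo r (ball 0 1) (f '' ball 0 1) ∧
      ∀ w ∈ f '' ball (0 : E₁) 1, r w = w := by
  let D : E₁ →ₗᵢ[ℂ] E₂ := ⟨(fderiv ℂ f 0).toLinearMap, hiso⟩
  obtain ⟨L, hL⟩ := D.exists_continuousLinearMap_comp_eq π fun z =>
    (hrange ▸ Set.mem_range_self z : π z ∈ Set.range D)
  have hgπ (z : E₂) : g (π z) = L z := by rw [← hL]; exact hg _
  have hL_ball : Set.MapsTo L (ball 0 1) (ball 0 1) := fun z hz => by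
    rw [mem_ball_zero_iff] at hz ⊢
    calc ‖L z‖ = ‖π z‖ := by rw [← hL, D.norm_map]
      _ ≤ ‖π‖ * ‖z‖ := π.le_opNorm z
      _ < 1 := by rwa [hnorm, one_mul]
  have hr_eq : Set.EqOn r (f ∘ L) (ball 0 1) := fun z hz => by
    have : π (f (L z)) = π z := (hπf _ (hL_ball hz)).trans (hL z)
    rw [hr, hgπ, this, Function.comp_apply, add_sub_cancel]
  refine ⟨(hf.comp (L.analyticOnNhd _) hL_ball).congr isOpen_ball hr_eq.symm,
    fun z hz => hr_eq hz ▸ Set.mem_image_of_mem f (hL_ball hz), ?_⟩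
  rintro _ ⟨x, hx, rfl⟩
  rw [hr_eq (hmap hx), Function.comp_apply, ← hgπ, hπf x hx, hg]

/-- Under the hypotheses of Theorem 1, the map `r(z) = π(z) + ψ(π(z))`, where
`ψ(y) = (id − π)(f((f'(0))⁻¹ y))` and `g = (f'(0))⁻¹` inverts the isometry `f'(0)` on its
range, is a holomorphic retraction of `B₂` onto `f(B₁)`. -/
theorem stmt16 {E₁ E₂ : Type*}
    [NormedAddCommGroup E₁] [NormedSpace ℂ E₁] [CompleteSpace E₁]
    [NormedAddCommGroup E₂] [NormedSpace ℂ E₂] [CompleteSpace E₂]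
    (f : E₁ → E₂) (hf : AnalyticOnNhd ℂ f (ball 0 1))
    (hmap : Set.MapsTo f (ball 0 1) (ball 0 1)) (hf0 : f 0 = 0)
    (hiso : ∀ X : E₁, ‖fderiv ℂ f 0 X‖ = ‖X‖)
    (π : E₂ →L[ℂ] E₂) (hidem : π.comp π = π) (hnorm : ‖π‖ = 1)
    (hrange : Set.range π = Set.range (fderiv ℂ f 0))
    (g : E₂ → E₁) (hg : ∀ x : E₁, g (fderiv ℂ f 0 x) = x)
    (hπf : ∀ z ∈ ball (0 : E₁) 1, π (f z) = fderiv ℂ f 0 z)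
    (r : E₂ → E₂) (hr : ∀ z : E₂, r z = π z + (f (g (π z)) - π (f (g (π z))))) :
    AnalyticOnNhd ℂ r (ball 0 1) ∧ Set.MapsTo r (ball 0 1) (f '' ball 0 1) ∧
      ∀ w ∈ f '' ball (0 : E₁) 1, r w = w :=
  stmt16_general f hf hmap hiso π hnorm hrange g hg hπf r hr
end
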